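/- arXiv:1710.11221 — 5 statements merged into one kernel-verified Lean document; each statement's English description precedes it below -/
import Mathlib

section
/- For integers n ≥ 1 and 1 ≤ k ≤ n, the number of admissible tuples of length n with center k equals the binomial coefficient C(n+1, k) = (n+1)! / ((n+1−k)! · k!). -/
/-!
Pad an admissible tuple of length `n` with a zero at both ends. The resulting path
`0 = t 0, t 1, …, t (n + 1) = 0` has `n + 1` steps; each of the first `k` rises by `0` or `1`,
each of the others falls by `0` or `1`. Mark the flat steps among the first `k` and the falling
steps among the others. Since every step rises by `[l < k] - [l marked]` and the path returns to
`0`, exactly `k` steps are marked, and the path is recovered from its marks as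
`t l = min l k - #{marked steps before l}`. Conversely every `k`-subset of the `n + 1` steps
arises this way, so admissible tuples are in bijection with `k`-subsets of `{0, …, n}`.
-/

/-- A tuple `(s 1, …, s m)` (encoded as a list of naturals, with `s (l+1)` the
entry `s.getD l 0`) is *admissible with center `i`* (1-indexed) if:
`s l ≤ s (l+1) ≤ s l + 1` for `1 ≤ l < i`;
`s l ≥ s (l+1) ≥ s l - 1` for `i ≤ l < m`; and `s 1 ≤ 1`, `s m ≤ 1`. -/
def AdmissibleCenter (i : ℕ) (s : List ℕ) : Prop :=
  (∀ l, 1 ≤ l → l < i →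
    s.getD (l - 1) 0 ≤ s.getD l 0 ∧ s.getD l 0 ≤ s.getD (l - 1) 0 + 1) ∧
  (∀ l, i ≤ l → l < s.length →
    s.getD l 0 ≤ s.getD (l - 1) 0 ∧ s.getD (l - 1) 0 - 1 ≤ s.getD l 0) ∧
  s.getD 0 0 ≤ 1 ∧ s.getD (s.length - 1) 0 ≤ 1

open Finset

namespace Nat

theorem add_ite_lt_eq {a b r : ℕ} (h : b ≤ a + r ∧ a + r ≤ b + 1) :
    b + (if b < a + r then 1 else 0) = a + r := by
  split_ifs <;> omega

theorem count_lt_eq_min (k l : ℕ) : count (· < k) l = min l k := by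
  induction l with
  | zero => simp
  | succ l ih => rw [count_succ, ih]; split_ifs <;> omega

theorem add_count_eq_count {p q : ℕ → Prop} [DecidablePred p] [DecidablePred q] {t : ℕ → ℕ}
    {N : ℕ} (h0 : t 0 = 0)
    (hstep : ∀ l < N, t (l + 1) + (if p l then 1 else 0) = t l + if q l then 1 else 0) :
    ∀ l ≤ N, t l + count p l = count q l := by
  intro l hl
  induction l with
  | zero => simp [h0]
  | succ l ih =>
    have := hstep l hl
    rw [count_succ, count_succ, ← ih (by omega)]
    omega

theorem count_mem_le_card (S : Finset ℕ) (m : ℕ) : count (· ∈ S) m ≤ #S := by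
  rw [count_eq_card_filter_range]
  exact card_le_card fun _ hj => (mem_filter.1 hj).2

theorem count_mem_eq_card {S : Finset ℕ} {m : ℕ} (hS : S ⊆ range m) : count (· ∈ S) m = #S := by
  rw [count_eq_card_filter_range, filter_mem_eq_inter, inter_eq_right.2 hS]

end Nat

namespace AdmissibleCenter

variable {n k l : ℕ} {s : List ℕ} {S : Finset ℕ}

def rise (k l : ℕ) : ℕ := if l < k then 1 else 0

def path (s : List ℕ) (l : ℕ) : ℕ := (0 :: s).getD l 0

theorem path_zero : path s 0 = 0 := rfl

theorem path_succ : path s (l + 1) = s.getD l 0 := rfl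

theorem path_of_pos (hl : 0 < l) : path s l = s.getD (l - 1) 0 := by
  obtain ⟨m, rfl⟩ := Nat.exists_eq_add_of_lt hl
  rfl

theorem path_of_length_lt (hl : s.length < l) : path s l = 0 :=
  List.getD_eq_default _ _ (by simpa using hl)

theorem iff_path (hk : 0 < k) (hkn : k ≤ s.length) :
    AdmissibleCenter k s ↔ ∀ l ≤ s.length,
      path s (l + 1) ≤ path s l + rise k l ∧ path s l + rise k l ≤ path s (l + 1) + 1 := by
  constructor
  · rintro ⟨hup, hdown, hfirst, hlast⟩ l hl
    rw [path_succ]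
    rcases Nat.eq_zero_or_pos l with rfl | hl0
    · simp only [path_zero, rise, if_pos hk]
      omega
    rw [path_of_pos hl0]
    by_cases hlk : l < k
    · have := hup l hl0 hlk
      simp only [rise, if_pos hlk]
      omega
    simp only [rise, if_neg hlk]
    rcases hl.lt_or_eq with hl | rfl
    · have := hdown l (by omega) hl
      omega
    · rw [List.getD_eq_default _ _ le_rfl]
      omega
  · intro h
    refine ⟨fun l hl0 hlk => ?_, fun l hkl hl => ?_, ?_, ?_⟩
    · have := h l (by omega)
      rw [path_succ, path_of_pos hl0] at this
      simp only [rise, if_pos hlk] at this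
      omega
    · have := h l hl.le
      rw [path_succ, path_of_pos (by omega)] at this
      simp only [rise, if_neg (not_lt.2 hkl)] at this
      omega
    · have := h 0 (by omega)
      simp only [path_succ, path_zero, rise, if_pos hk] at this
      omega
    · have := h s.length le_rfl
      rw [path_of_length_lt (Nat.lt_succ_self _), path_of_pos (by omega)] at this
      simp only [rise, if_neg (not_lt.2 hkn)] at this
      omega

def markedSteps (k : ℕ) (s : List ℕ) : Finset ℕ :=
  {l ∈ range (s.length + 1) | path s (l + 1) < path s l + rise k l}

theorem markedSteps_subset : markedSteps k s ⊆ range (s.length + 1) :=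
  filter_subset _ _

theorem path_add_count_markedSteps (hk : 0 < k) (hkn : k ≤ s.length)
    (hs : AdmissibleCenter k s) :
    ∀ l ≤ s.length + 1, path s l + Nat.count (· ∈ markedSteps k s) l = min l k := by
  simp only [← Nat.count_lt_eq_min k]
  refine Nat.add_count_eq_count path_zero fun l hl => ?_
  have hmem : l ∈ markedSteps k s ↔ path s (l + 1) < path s l + rise k l := by
    simp only [markedSteps, mem_filter, mem_range, and_iff_right_iff_imp]
    omega
  simp only [hmem]
  exact Nat.add_ite_lt_eq ((iff_path hk hkn).1 hs l (by omega))

theorem card_markedSteps (hk : 0 < k) (hkn : k ≤ s.length) (hs : AdmissibleCenter k s) :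
    #(markedSteps k s) = k := by
  have h := path_add_count_markedSteps hk hkn hs (s.length + 1) le_rfl
  rwa [path_of_length_lt (Nat.lt_succ_self _), zero_add, Nat.count_mem_eq_card markedSteps_subset,
    min_eq_right (by omega)] at h

def height (k : ℕ) (S : Finset ℕ) (l : ℕ) : ℕ := min l k - Nat.count (· ∈ S) l

theorem height_succ_add (hS : #S ≤ k) (l : ℕ) :
    height k S (l + 1) + (if l ∈ S then 1 else 0) = height k S l + rise k l := by
  have hsucc := Nat.count_succ (· ∈ S) l
  have hle : Nat.count (· ∈ S) (l + 1) ≤ min (l + 1) k :=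
    le_min (Nat.count_le _) ((Nat.count_mem_le_card S _).trans hS)
  have hle' : Nat.count (· ∈ S) l ≤ l := Nat.count_le _
  simp only [height, rise] at hsucc ⊢
  split_ifs at hsucc ⊢ <;> omega

def tupleOfMarks (n k : ℕ) (S : Finset ℕ) : List ℕ :=
  (List.range n).map fun i => height k S (i + 1)

theorem length_tupleOfMarks (n k : ℕ) (S : Finset ℕ) : (tupleOfMarks n k S).length = n := by
  simp [tupleOfMarks]

theorem path_tupleOfMarks (hS : S ⊆ range (n + 1)) (hcard : #S = k) :
    ∀ l ≤ n + 1, path (tupleOfMarks n k S) l = height k S l := by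
  intro l hl
  rcases l with _ | l
  · simp [path_zero, height]
  rcases hl.lt_or_eq with hl | hl
  · rw [path_succ, List.getD_eq_getElem _ _ (by simp [length_tupleOfMarks]; omega)]
    simp [tupleOfMarks]
  · obtain rfl : n = l := by omega
    rw [path_of_length_lt (by simp [length_tupleOfMarks]), height, Nat.count_mem_eq_card hS]
    omega

theorem admissibleCenter_tupleOfMarks (hk : 0 < k) (hkn : k ≤ n) (hS : S ⊆ range (n + 1))
    (hcard : #S = k) : AdmissibleCenter k (tupleOfMarks n k S) := by
  rw [iff_path hk (by rwa [length_tupleOfMarks])]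
  intro l hl
  rw [length_tupleOfMarks] at hl
  rw [path_tupleOfMarks hS hcard l (by omega), path_tupleOfMarks hS hcard (l + 1) (by omega)]
  have := height_succ_add hcard.le l
  split_ifs at this <;> omega

theorem markedSteps_tupleOfMarks (hS : S ⊆ range (n + 1)) (hcard : #S = k) :
    markedSteps k (tupleOfMarks n k S) = S := by
  ext l
  simp only [markedSteps, mem_filter, mem_range, length_tupleOfMarks]
  by_cases hl : l < n + 1
  · rw [path_tupleOfMarks hS hcard l (by omega), path_tupleOfMarks hS hcard (l + 1) (by omega)]
    have := height_succ_add hcard.le l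
    split_ifs at this with h <;> simp only [hl, h, true_and, iff_true, iff_false] <;> omega
  · simp only [hl, false_and, false_iff]
    exact fun h => hl (mem_range.1 (hS h))

theorem tupleOfMarks_markedSteps (hk : 0 < k) (hkn : k ≤ s.length) (hs : AdmissibleCenter k s) :
    tupleOfMarks s.length k (markedSteps k s) = s := by
  refine List.ext_getElem (length_tupleOfMarks _ _ _) fun i _ hi => ?_
  have := path_add_count_markedSteps hk hkn hs (i + 1) (by omega)
  rw [path_succ, List.getD_eq_getElem _ _ hi] at this
  simp only [tupleOfMarks, height, List.getElem_map, List.getElem_range]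
  omega

theorem bijOn_markedSteps (hk : 0 < k) (hkn : k ≤ n) :
    Set.BijOn (markedSteps k) {s | s.length = n ∧ AdmissibleCenter k s}
      (powersetCard k (range (n + 1)) : Set (Finset ℕ)) := by
  have hinv : Set.InvOn (tupleOfMarks n k) (markedSteps k)
      {s | s.length = n ∧ AdmissibleCenter k s} (powersetCard k (range (n + 1))) := by
    refine ⟨?_, fun S hS => ?_⟩
    · rintro s ⟨rfl, hs⟩
      exact tupleOfMarks_markedSteps hk hkn hs
    · rw [mem_coe, mem_powersetCard] at hS
      exact markedSteps_tupleOfMarks hS.1 hS.2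
  refine hinv.bijOn ?_ fun S hS => ?_
  · rintro s ⟨rfl, hs⟩
    rw [mem_coe, mem_powersetCard]
    exact ⟨markedSteps_subset, card_markedSteps hk hkn hs⟩
  · rw [mem_coe, mem_powersetCard] at hS
    exact ⟨length_tupleOfMarks n k S, admissibleCenter_tupleOfMarks hk hkn hS.1 hS.2⟩

end AdmissibleCenter

theorem card_admissible_tuples_general (n k : ℕ) (hk : 1 ≤ k) (hkn : k ≤ n) :
    {s : List ℕ | s.length = n ∧ AdmissibleCenter k s}.ncard = Nat.choose (n + 1) k := by
  rw [(AdmissibleCenter.bijOn_markedSteps hk hkn).ncard_eq, Set.ncard_coe_finset,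
    card_powersetCard, card_range]

/-- Lemma 4.5: the number of admissible tuples of length `n` with center `k`
is the binomial coefficient `C(n+1, k)`. -/
theorem card_admissible_tuples (n k : ℕ) (hn : 1 ≤ n) (hk : 1 ≤ k) (hkn : k ≤ n) :
    {s : List ℕ | s.length = n ∧ AdmissibleCenter k s}.ncard = Nat.choose (n + 1) k :=
  card_admissible_tuples_general n k hk hkn
end

section
/- For integers n ≥ 4 and 2 ≤ k ≤ n−1, the number of admissible tuples (s_1, …, s_n) of length n with center k satisfying s_1 = 0, s_2 = 1, s_{n−1} = 1 and s_n = 0 equals the binomial coefficient C(n−3, k−2). -/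
/-!
Such a tuple starts `0, 1`, rises by steps of `0` or `1` up to the center, falls by steps
of `0` or `1` down to `1, 0`, and has `n - 3` free steps in between. Mark the flat steps before the
center and the falling steps after it. The heights are recovered by counting unmarked steps from
the left, or marked steps from the right, and the two counts agree at the center exactly when
`k - 2` steps are marked. So the marked sets are the `(k - 2)`-subsets of the free steps.
-/

open Finset

namespace Finset

variable {f : ℕ → ℕ} {p : ℕ → Prop} [DecidablePred p] {a b : ℕ}

theorem card_filter_Ico_succ_top (hab : a ≤ b) :
    #{t ∈ Ico a (b + 1) | p t} = #{t ∈ Ico a b | p t} + if p b then 1 else 0 := by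
  simp only [card_filter]
  exact sum_Ico_succ_top hab _

theorem card_filter_Ico_eq_succ_bot (hab : a < b) :
    #{t ∈ Ico a b | p t} = (if p a then 1 else 0) + #{t ∈ Ico (a + 1) b | p t} := by
  simp only [card_filter]
  exact sum_eq_sum_Ico_succ_bot hab _

theorem eq_add_card_filter_Ico_of_step_up (hab : a ≤ b)
    (h : ∀ t ∈ Ico a b, f (t + 1) = f t + if p t then 1 else 0) :
    f b = f a + #{t ∈ Ico a b | p t} := by
  induction b, hab using Nat.le_induction with
  | base => simp
  | succ b hab ih =>
    rw [card_filter_Ico_succ_top hab, h b (mem_Ico.2 ⟨hab, b.lt_succ_self⟩),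
      ih fun t ht => h t (Ico_subset_Ico_right b.le_succ ht), add_assoc]

theorem eq_add_card_filter_Ico_of_step_down (hab : a ≤ b)
    (h : ∀ t ∈ Ico a b, f t = f (t + 1) + if p t then 1 else 0) :
    f a = f b + #{t ∈ Ico a b | p t} := by
  induction b, hab using Nat.le_induction with
  | base => simp
  | succ b hab ih =>
    rw [card_filter_Ico_succ_top hab, ih fun t ht => h t (Ico_subset_Ico_right b.le_succ ht),
      h b (mem_Ico.2 ⟨hab, b.lt_succ_self⟩)]
    ring

theorem card_filter_Ico_notMem_add_card {S : Finset ℕ} {a b c : ℕ} (hS : S ⊆ Ico a c)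
    (hab : a ≤ b) (hbc : b ≤ c) :
    #{t ∈ Ico a b | t ∉ S} + #S = #{t ∈ Ico b c | t ∈ S} + (b - a) := by
  have hsplit : #S = #{t ∈ Ico a b | t ∈ S} + #{t ∈ Ico b c | t ∈ S} := by
    rw [← card_union_of_disjoint (disjoint_filter_filter (Ico_disjoint_Ico_consecutive a b c)),
      ← filter_union, Ico_union_Ico_eq_Ico hab hbc, filter_mem_eq_inter, inter_eq_right.2 hS]
  have hcompl := card_filter_add_card_filter_not (s := Ico a b) (· ∈ S)
  rw [Nat.card_Ico] at hcompl
  omega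

end Finset

/-- `f i` is the entry at the 0-based position `i` of a tuple `(0, 1, …, 1, 0)` of length `n`
with center `k`. The free steps are `t → t + 1` for `1 ≤ t ≤ n - 3`: those with `t < k - 1` rise
by `0` or `1`, the others fall by `0` or `1`, and `S` marks the flat rises and the falls. -/
structure IsMarkedPath (n k : ℕ) (S : Finset ℕ) (f : ℕ → ℕ) : Prop where
  zero : f 0 = 0
  one : f 1 = 1
  penult : f (n - 2) = 1
  last : f (n - 1) = 0
  rise : ∀ t ∈ Ico 1 (k - 1), f (t + 1) = f t + if t ∉ S then 1 else 0
  fall : ∀ t ∈ Ico (k - 1) (n - 2), f t = f (t + 1) + if t ∈ S then 1 else 0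

def markedSteps (n k : ℕ) (f : ℕ → ℕ) : Finset ℕ :=
  {t ∈ Ico 1 (n - 2) | if t < k - 1 then f (t + 1) = f t else f (t + 1) < f t}

def markedProfile (n k : ℕ) (S : Finset ℕ) (i : ℕ) : ℕ :=
  if i = 0 ∨ n - 1 ≤ i then 0
  else if i < k then 1 + #{t ∈ Ico 1 i | t ∉ S}
  else 1 + #{t ∈ Ico i (n - 2) | t ∈ S}

namespace IsMarkedPath

variable {n k : ℕ} {S : Finset ℕ} {f g : ℕ → ℕ}

theorem eq_of_le_center (hf : IsMarkedPath n k S f) {i : ℕ} (hi : 1 ≤ i) (hik : i ≤ k - 1) :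
    f i = 1 + #{t ∈ Ico 1 i | t ∉ S} := by
  rw [eq_add_card_filter_Ico_of_step_up hi fun t ht => hf.rise t (Ico_subset_Ico_right hik ht),
    hf.one]

theorem eq_of_center_le (hf : IsMarkedPath n k S f) {i : ℕ} (hki : k - 1 ≤ i) (hin : i ≤ n - 2) :
    f i = 1 + #{t ∈ Ico i (n - 2) | t ∈ S} := by
  rw [eq_add_card_filter_Ico_of_step_down hin fun t ht => hf.fall t (Ico_subset_Ico_left hki ht),
    hf.penult]

theorem eqOn_Iio (hf : IsMarkedPath n k S f) (hg : IsMarkedPath n k S g) :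
    Set.EqOn f g (Set.Iio n) := by
  intro i hi
  rw [Set.mem_Iio] at hi
  obtain rfl | hi0 := Nat.eq_zero_or_pos i
  · rw [hf.zero, hg.zero]
  obtain rfl | hin := eq_or_lt_of_le (Nat.le_sub_one_of_lt hi)
  · rw [hf.last, hg.last]
  obtain hik | hki := le_total i (k - 1)
  · rw [hf.eq_of_le_center hi0 hik, hg.eq_of_le_center hi0 hik]
  · rw [hf.eq_of_center_le hki (by omega), hg.eq_of_center_le hki (by omega)]

theorem card_eq (hf : IsMarkedPath n k S f) (hS : S ⊆ Ico 1 (n - 2)) (hk : 2 ≤ k)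
    (hkn : k ≤ n - 1) : #S = k - 2 := by
  have hbalance := card_filter_Ico_notMem_add_card hS (b := k - 1) (by omega) (by omega)
  have hpeak := (hf.eq_of_le_center (by omega) le_rfl).symm.trans
    (hf.eq_of_center_le le_rfl (by omega))
  omega

theorem markedSteps_eq (hf : IsMarkedPath n k S f) (hS : S ⊆ Ico 1 (n - 2)) :
    markedSteps n k f = S := by
  ext t
  rw [markedSteps, mem_filter]
  by_cases ht : t ∈ Ico 1 (n - 2)
  · rw [mem_Ico] at ht
    split_ifs with htk
    · have := hf.rise t (mem_Ico.2 ⟨ht.1, htk⟩)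
      split_ifs at this with hmem <;> simp_all
    · have := hf.fall t (mem_Ico.2 ⟨by omega, ht.2⟩)
      split_ifs at this with hmem <;> simp_all
  · exact iff_of_false (fun h => ht h.1) (fun h => ht (hS h))

end IsMarkedPath

section Profile

variable {n k : ℕ} {S : Finset ℕ}

theorem markedProfile_of_lt_center {i : ℕ} (hi : 1 ≤ i) (hik : i < k) (hin : i < n - 1) :
    markedProfile n k S i = 1 + #{t ∈ Ico 1 i | t ∉ S} := by
  rw [markedProfile, if_neg (by omega), if_pos hik]

theorem markedProfile_of_center_le {i : ℕ} (hi : 1 ≤ i) (hki : k ≤ i) (hin : i < n - 1) :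
    markedProfile n k S i = 1 + #{t ∈ Ico i (n - 2) | t ∈ S} := by
  rw [markedProfile, if_neg (by omega), if_neg (by omega)]

theorem isMarkedPath_markedProfile (hS : S ⊆ Ico 1 (n - 2)) (hcard : #S = k - 2) (hk : 2 ≤ k)
    (hkn : k ≤ n - 1) : IsMarkedPath n k S (markedProfile n k S) := by
  have hbalance : #{t ∈ Ico 1 (k - 1) | t ∉ S} = #{t ∈ Ico (k - 1) (n - 2) | t ∈ S} := by
    have := card_filter_Ico_notMem_add_card hS (b := k - 1) (by omega) (by omega)
    omega
  have hdesc : ∀ i, k - 1 ≤ i → i < n - 1 →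
      markedProfile n k S i = 1 + #{t ∈ Ico i (n - 2) | t ∈ S} := by
    intro i hki hin
    obtain hik | hki := lt_or_ge i k
    · obtain rfl : i = k - 1 := by omega
      rw [markedProfile_of_lt_center (n := n) (by omega) hik hin, hbalance]
    · exact markedProfile_of_center_le (by omega) hki hin
  refine ⟨by simp [markedProfile], ?_, ?_, by simp [markedProfile], ?_, ?_⟩
  · rw [markedProfile_of_lt_center (n := n) le_rfl hk (by omega)]
    simp
  · rw [hdesc (n - 2) (by omega) (by omega)]
    simp
  · intro t ht
    rw [mem_Ico] at ht
    rw [markedProfile_of_lt_center (n := n) (by omega) (by omega) (by omega),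
      markedProfile_of_lt_center (n := n) ht.1 (by omega) (by omega), card_filter_Ico_succ_top ht.1]
    ring
  · intro t ht
    rw [mem_Ico] at ht
    rw [hdesc t ht.1 (by omega), hdesc (t + 1) (by omega) (by omega),
      card_filter_Ico_eq_succ_bot ht.2]
    ring

theorem getD_map_range_markedProfile {i : ℕ} :
    ((List.range n).map (markedProfile n k S)).getD i 0 = markedProfile n k S i := by
  by_cases hi : i < n
  · simp [hi]
  · rw [List.getD_eq_default _ _ (by simpa using hi), markedProfile, if_pos (by omega)]

end Profile

section Tuples

variable {n k : ℕ} {S : Finset ℕ} {s : List ℕ}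

theorem isMarkedPath_markedSteps (hlen : s.length = n) (hadm : AdmissibleCenter k s)
    (hk : 2 ≤ k) (hkn : k ≤ n - 1) (h0 : s.getD 0 0 = 0) (h1 : s.getD 1 0 = 1)
    (hp : s.getD (n - 2) 0 = 1) (hl : s.getD (n - 1) 0 = 0) :
    IsMarkedPath n k (markedSteps n k (s.getD · 0)) (s.getD · 0) := by
  refine ⟨h0, h1, hp, hl, fun t ht => ?_, fun t ht => ?_⟩
  · rw [mem_Ico] at ht
    have hstep := hadm.1 (t + 1) (by omega) (by omega)
    have hmem : t ∈ markedSteps n k (s.getD · 0) ↔ s.getD (t + 1) 0 = s.getD t 0 := by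
      rw [markedSteps, mem_filter, mem_Ico, if_pos ht.2, and_iff_right ⟨ht.1, by omega⟩]
    rw [Nat.add_sub_cancel] at hstep
    split_ifs with h <;> rw [hmem] at h <;> omega
  · rw [mem_Ico] at ht
    have hstep := hadm.2.1 (t + 1) (by omega) (by omega)
    have hmem : t ∈ markedSteps n k (s.getD · 0) ↔ s.getD (t + 1) 0 < s.getD t 0 := by
      rw [markedSteps, mem_filter, mem_Ico, if_neg (by omega), and_iff_right ⟨by omega, ht.2⟩]
    rw [Nat.add_sub_cancel] at hstep
    split_ifs with h <;> rw [hmem] at h <;> omega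

theorem admissibleCenter_of_isMarkedPath (hlen : s.length = n) (hk : 1 ≤ k)
    (hs : IsMarkedPath n k S (s.getD · 0)) : AdmissibleCenter k s := by
  obtain ⟨h0, h1, hp, hl, hrise, hfall⟩ := hs
  refine ⟨fun l hl1 hlk => ?_, fun l hkl hln => ?_, by omega, by rw [hlen]; omega⟩
  · obtain rfl | hl1 := eq_or_lt_of_le hl1
    · rw [Nat.sub_self]
      omega
    · have hstep := hrise (l - 1) (mem_Ico.2 ⟨by omega, by omega⟩)
      rw [Nat.sub_add_cancel (by omega)] at hstep
      split_ifs at hstep <;> omega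
  · rw [hlen] at hln
    obtain rfl | hln := eq_or_lt_of_le (Nat.le_sub_one_of_lt hln)
    · rw [show n - 1 - 1 = n - 2 by omega]
      omega
    · have hstep := hfall (l - 1) (mem_Ico.2 ⟨by omega, by omega⟩)
      rw [Nat.sub_add_cancel (by omega)] at hstep
      split_ifs at hstep <;> omega

theorem List.eq_of_isMarkedPath {s' : List ℕ} (hlen : s.length = n) (hlen' : s'.length = n)
    (hs : IsMarkedPath n k S (s.getD · 0)) (hs' : IsMarkedPath n k S (s'.getD · 0)) :
    s = s' :=
  List.ext_getElem (hlen.trans hlen'.symm) fun i hi hi' => by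
    simpa [List.getD_eq_getElem, hi, hi'] using hs.eqOn_Iio hs' (hlen ▸ hi : i < n)

end Tuples

theorem card_admissible_tuples_boundary₁_general (n k : ℕ)
    (hk : 2 ≤ k) (hkn : k ≤ n - 1) :
    {s : List ℕ | s.length = n ∧ AdmissibleCenter k s ∧
      s.getD 0 0 = 0 ∧ s.getD 1 0 = 1 ∧
      s.getD (n - 2) 0 = 1 ∧ s.getD (n - 1) 0 = 0}.ncard
      = Nat.choose (n - 3) (k - 2) := by
  have hfree : n - 3 = #(Ico 1 (n - 2)) := by
    rw [Nat.card_Ico]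
    omega
  rw [hfree, ← card_powersetCard, ← Set.ncard_coe_finset]
  refine Set.ncard_congr (fun s _ => markedSteps n k (s.getD · 0)) ?_ ?_ ?_
  · rintro s ⟨hlen, hadm, h0, h1, hp, hl⟩
    exact mem_powersetCard.2 ⟨filter_subset _ _,
      (isMarkedPath_markedSteps hlen hadm hk hkn h0 h1 hp hl).card_eq (filter_subset _ _) hk hkn⟩
  · rintro s s' ⟨hlen, hadm, h0, h1, hp, hl⟩ ⟨hlen', hadm', h0', h1', hp', hl'⟩ hsteps
    have hs := isMarkedPath_markedSteps hlen hadm hk hkn h0 h1 hp hl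
    rw [hsteps] at hs
    exact List.eq_of_isMarkedPath hlen hlen' hs
      (isMarkedPath_markedSteps hlen' hadm' hk hkn h0' h1' hp' hl')
  · intro S hS
    obtain ⟨hSsub, hcard⟩ := mem_powersetCard.1 (mem_coe.1 hS)
    have hprofile : (((List.range n).map (markedProfile n k S)).getD · 0) = markedProfile n k S :=
      funext fun _ => getD_map_range_markedProfile
    have hP := isMarkedPath_markedProfile hSsub hcard hk hkn
    rw [← hprofile] at hP
    exact ⟨_, ⟨by simp, admissibleCenter_of_isMarkedPath (by simp) (by omega) hP, hP.zero, hP.one,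
      hP.penult, hP.last⟩, hP.markedSteps_eq hSsub⟩

/-- For `n ≥ 4` and `2 ≤ k ≤ n-1`, the number of admissible tuples
`(s 1, …, s n)` of length `n` with center `k` satisfying
`s 1 = 0`, `s 2 = 1`, `s (n-1) = 1`, `s n = 0` is `C(n-3, k-2)`. -/
theorem card_admissible_tuples_boundary₁ (n k : ℕ) (hn : 4 ≤ n)
    (hk : 2 ≤ k) (hkn : k ≤ n - 1) :
    {s : List ℕ | s.length = n ∧ AdmissibleCenter k s ∧
      s.getD 0 0 = 0 ∧ s.getD 1 0 = 1 ∧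
      s.getD (n - 2) 0 = 1 ∧ s.getD (n - 1) 0 = 0}.ncard
      = Nat.choose (n - 3) (k - 2) :=
  card_admissible_tuples_boundary₁_general n k hk hkn
end

section
/- For integers n ≥ 4 and 2 ≤ k ≤ n−1, the number of admissible tuples (s_1, …, s_n) of length n with center k satisfying s_1 = 1, s_2 = 1, s_{n−1} = 1 and s_n = 0 equals the binomial coefficient C(n−3, k−2). -/
open Finset

/-- Adding the tilt `[c ≤ t]` to the `t`-th step turns the ascending steps before `c` and the
descending steps from `c` on into steps of size `0` or `1`. -/
def IsUpDownWalk (c : ℕ) (s : List ℕ) : Prop :=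
  ∀ t, t + 1 < s.length →
    s.getD t 0 ≤ s.getD (t + 1) 0 + (if c ≤ t then 1 else 0) ∧
      s.getD (t + 1) 0 + (if c ≤ t then 1 else 0) ≤ s.getD t 0 + 1

theorem admissibleCenter_succ_iff {c : ℕ} {s : List ℕ} (hc : c < s.length) :
    AdmissibleCenter (c + 1) s ↔
      IsUpDownWalk c s ∧ s.getD 0 0 ≤ 1 ∧ s.getD (s.length - 1) 0 ≤ 1 := by
  rw [AdmissibleCenter, ← and_assoc]
  refine and_congr_left' ⟨fun ⟨hup, hdown⟩ t ht => ?_,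
    fun hs => ⟨fun l hl hlc => ?_, fun l hl hln => ?_⟩⟩
  · by_cases hct : c ≤ t
    · have := hdown (t + 1) (by omega) ht
      simp only [add_tsub_cancel_right, if_pos hct] at this ⊢
      omega
    · have := hup (t + 1) (by omega) (by omega)
      simp only [add_tsub_cancel_right, if_neg hct] at this ⊢
      omega
  · have := hs (l - 1) (by omega)
    rw [Nat.sub_add_cancel hl, if_neg (by omega)] at this
    omega
  · have := hs (l - 1) (by omega)
    rw [Nat.sub_add_cancel (by omega), if_pos (by omega)] at this
    omega

/-- The height after `t` steps of the walk that starts at `1` and whose `j`-th tilted step is `1`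
exactly when `j ∈ T`. -/
def walkHeight (c : ℕ) (T : Finset ℕ) (t : ℕ) : ℤ :=
  1 + #(T ∩ range t) - (t - c : ℕ)

section walkHeight

variable {c : ℕ} {T : Finset ℕ}

@[simp]
theorem walkHeight_zero : walkHeight c T 0 = 1 := by
  simp [walkHeight]

theorem walkHeight_succ (t : ℕ) :
    walkHeight c T (t + 1) =
      walkHeight c T t + (if t ∈ T then 1 else 0) - (if c ≤ t then 1 else 0) := by
  have hcard : #(T ∩ range (t + 1)) = #(T ∩ range t) + if t ∈ T then 1 else 0 := by
    rw [range_add_one]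
    split_ifs with h
    · rw [inter_insert_of_mem h, card_insert_of_notMem (by simp)]
    · rw [inter_insert_of_notMem h, add_zero]
  have hsub : t + 1 - c = t - c + if c ≤ t then 1 else 0 := by
    split_ifs <;> omega
  rw [walkHeight, walkHeight, hcard, hsub]
  push_cast
  ring

theorem walkHeight_of_subset_range {m : ℕ} (hT : T ⊆ range m) :
    walkHeight c T m = 1 + #T - (m - c : ℕ) := by
  rw [walkHeight, inter_eq_left.mpr hT]

/-- A walk with `#T` tilted up-steps among its first `m` steps that ends at height `0` never
went below `0`: the steps after `t` can lower it by at most `m - t`. -/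
theorem walkHeight_nonneg {m t : ℕ} (hT : T ⊆ range m) (hcard : #T + c + 1 = m) (ht : t ≤ m) :
    0 ≤ walkHeight c T t := by
  have hlate : #(T \ range t) ≤ m - t := by
    calc #(T \ range t) ≤ #(Ico t m) := card_le_card fun j hj => by
          simp only [mem_sdiff, mem_range, not_lt] at hj
          exact mem_Ico.mpr ⟨hj.2, mem_range.mp (hT hj.1)⟩
      _ = m - t := Nat.card_Ico t m
  have := card_inter_add_card_sdiff T (range t)
  rw [walkHeight]
  omega

end walkHeight

def walkList (n c : ℕ) (T : Finset ℕ) : List ℕ :=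
  List.ofFn fun i : Fin n => (walkHeight c T i).toNat

def walkSteps (c : ℕ) (s : List ℕ) : Finset ℕ :=
  {t ∈ range (s.length - 1) | s.getD (t + 1) 0 + (if c ≤ t then 1 else 0) = s.getD t 0 + 1}

theorem mem_walkSteps {c t : ℕ} {s : List ℕ} :
    t ∈ walkSteps c s ↔
      t + 1 < s.length ∧ s.getD (t + 1) 0 + (if c ≤ t then 1 else 0) = s.getD t 0 + 1 := by
  rw [walkSteps, mem_filter, mem_range, Nat.lt_sub_iff_add_lt]

section walkList

variable {n c : ℕ} {T : Finset ℕ}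

@[simp]
theorem walkList_length : (walkList n c T).length = n :=
  List.length_ofFn

theorem walkList_getD {t : ℕ} (ht : t < n) :
    (walkList n c T).getD t 0 = (walkHeight c T t).toNat := by
  rw [walkList, List.getD_eq_getElem _ _ (by simpa using ht), List.getElem_ofFn]

theorem isUpDownWalk_walkList (hT : ∀ t < n, 0 ≤ walkHeight c T t) :
    IsUpDownWalk c (walkList n c T) := by
  intro t ht
  rw [walkList_length] at ht
  have := walkHeight_succ (c := c) (T := T) t
  have := hT t (by omega)
  have := hT (t + 1) ht
  rw [walkList_getD ht, walkList_getD (by omega)]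
  split_ifs at * <;> omega

theorem walkSteps_walkList (hT : ∀ t < n, 0 ≤ walkHeight c T t) (hTn : T ⊆ range (n - 1)) :
    walkSteps c (walkList n c T) = T := by
  ext t
  rw [mem_walkSteps, walkList_length]
  by_cases ht : t + 1 < n
  · have := walkHeight_succ (c := c) (T := T) t
    have := hT t (by omega)
    have := hT (t + 1) ht
    rw [walkList_getD ht, walkList_getD (by omega)]
    by_cases hm : t ∈ T <;> simp only [hm, ht, true_and, iff_true, iff_false] at * <;>
      split_ifs at * <;> omega
  · exact iff_of_false (fun h => ht h.1) fun h => by have := mem_range.mp (hTn h); omega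

end walkList

namespace IsUpDownWalk

variable {c : ℕ} {s : List ℕ}

theorem getD_eq_walkHeight (hs : IsUpDownWalk c s) (h0 : s.getD 0 0 = 1) :
    ∀ t < s.length, (s.getD t 0 : ℤ) = walkHeight c (walkSteps c s) t
  | 0, _ => by rw [h0, walkHeight_zero, Nat.cast_one]
  | t + 1, ht => by
    have ih := hs.getD_eq_walkHeight h0 t (by omega)
    have hmem : t ∈ walkSteps c s ↔
        s.getD (t + 1) 0 + (if c ≤ t then 1 else 0) = s.getD t 0 + 1 := by
      simp [mem_walkSteps, ht]
    have := hs t ht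
    rw [walkHeight_succ, ← ih]
    by_cases hm : t ∈ walkSteps c s
    · have := hmem.mp hm
      split_ifs at * <;> omega
    · have := mt hmem.mpr hm
      split_ifs at * <;> omega

theorem walkList_walkSteps (hs : IsUpDownWalk c s) (h0 : s.getD 0 0 = 1) :
    walkList s.length c (walkSteps c s) = s := by
  refine List.ext_getElem walkList_length fun t ht _ => ?_
  rw [← List.getD_eq_getElem _ 0, ← List.getD_eq_getElem _ 0, walkList_getD (by simpa using ht),
    ← hs.getD_eq_walkHeight h0 t (by simpa using ht), Int.toNat_natCast]

end IsUpDownWalk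

section boundary

variable {n c : ℕ}

theorem walkSteps_mem_powersetCard {s : List ℕ} (hc : 1 ≤ c) (hcn : c + 2 ≤ n)
    (hlen : s.length = n) (hs : IsUpDownWalk c s) (h0 : s.getD 0 0 = 1) (h1 : s.getD 1 0 = 1)
    (h2 : s.getD (n - 2) 0 = 1) (h3 : s.getD (n - 1) 0 = 0) :
    walkSteps c s ∈ powersetCard (n - 2 - c) (Ico 1 (n - 2)) := by
  have hsub : walkSteps c s ⊆ range (n - 1) := hlen ▸ filter_subset _ _
  have hfirst : 0 ∉ walkSteps c s := by
    rw [mem_walkSteps, zero_add, h0, h1, if_neg (by omega)]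
    omega
  have hlast : n - 2 ∉ walkSteps c s := by
    rw [mem_walkSteps, show n - 2 + 1 = n - 1 by omega, h2, h3, if_pos (by omega)]
    omega
  have hend := hs.getD_eq_walkHeight h0 (n - 1) (by omega)
  rw [h3, walkHeight_of_subset_range hsub] at hend
  refine mem_powersetCard.mpr ⟨fun t ht => mem_Ico.mpr ?_, by omega⟩
  have := mem_range.mp (hsub ht)
  have : t ≠ 0 := by rintro rfl; exact hfirst ht
  have : t ≠ n - 2 := by rintro rfl; exact hlast ht
  omega

variable {T : Finset ℕ}

theorem subset_range_of_mem_powersetCard (hT : T ∈ powersetCard (n - 2 - c) (Ico 1 (n - 2))) :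
    T ⊆ range (n - 1) :=
  fun t ht => mem_range.mpr (by have := mem_Ico.mp (mem_powersetCard.mp hT |>.1 ht); omega)

theorem walkHeight_nonneg_of_mem_powersetCard (hcn : c + 2 ≤ n)
    (hT : T ∈ powersetCard (n - 2 - c) (Ico 1 (n - 2))) :
    ∀ t < n, 0 ≤ walkHeight c T t := fun _ ht =>
  walkHeight_nonneg (subset_range_of_mem_powersetCard hT)
    (by rw [(mem_powersetCard.mp hT).2]; omega) (by omega)

theorem walkList_boundary (hc : 1 ≤ c) (hcn : c + 2 ≤ n)
    (hT : T ∈ powersetCard (n - 2 - c) (Ico 1 (n - 2))) :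
    IsUpDownWalk c (walkList n c T) ∧ (walkList n c T).getD 0 0 = 1 ∧
      (walkList n c T).getD 1 0 = 1 ∧ (walkList n c T).getD (n - 2) 0 = 1 ∧
      (walkList n c T).getD (n - 1) 0 = 0 := by
  obtain ⟨hTIco, hcard⟩ := mem_powersetCard.mp hT
  have hfirst : 0 ∉ T := fun h => by simpa using hTIco h
  have hlast : n - 2 ∉ T := fun h => by simpa using hTIco h
  have hend : walkHeight c T (n - 1) = 0 := by
    rw [walkHeight_of_subset_range (subset_range_of_mem_powersetCard hT)]
    omega
  have hpen : walkHeight c T (n - 2) = 1 := by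
    have := walkHeight_succ (c := c) (T := T) (n - 2)
    rw [show n - 2 + 1 = n - 1 by omega, hend, if_neg hlast, if_pos (by omega)] at this
    omega
  have hone : walkHeight c T 1 = 1 := by
    rw [walkHeight_succ, if_neg hfirst, if_neg (by omega), walkHeight_zero]
    rfl
  refine ⟨isUpDownWalk_walkList (walkHeight_nonneg_of_mem_powersetCard hcn hT),
    ?_, ?_, ?_, ?_⟩ <;> rw [walkList_getD (by omega)] <;> simp [hone, hpen, hend]

theorem injOn_walkList (hcn : c + 2 ≤ n) :
    Set.InjOn (walkList n c) (powersetCard (n - 2 - c) (Ico 1 (n - 2))) :=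
  fun T hT T' hT' h => by
    rw [← walkSteps_walkList (walkHeight_nonneg_of_mem_powersetCard hcn hT)
      (subset_range_of_mem_powersetCard hT), h,
      walkSteps_walkList (walkHeight_nonneg_of_mem_powersetCard hcn hT')
      (subset_range_of_mem_powersetCard hT')]

theorem admissible_boundary_eq_image_walkList (hc : 1 ≤ c) (hcn : c + 2 ≤ n) :
    {s : List ℕ | s.length = n ∧ AdmissibleCenter (c + 1) s ∧
      s.getD 0 0 = 1 ∧ s.getD 1 0 = 1 ∧ s.getD (n - 2) 0 = 1 ∧ s.getD (n - 1) 0 = 0} =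
      walkList n c '' powersetCard (n - 2 - c) (Ico 1 (n - 2)) := by
  ext s
  constructor
  · rintro ⟨rfl, hA, h0, h1, h2, h3⟩
    have hs := ((admissibleCenter_succ_iff (by omega)).mp hA).1
    exact ⟨_, walkSteps_mem_powersetCard hc hcn rfl hs h0 h1 h2 h3, hs.walkList_walkSteps h0⟩
  · rintro ⟨T, hT, rfl⟩
    obtain ⟨hw, h0, h1, h2, h3⟩ := walkList_boundary hc hcn hT
    refine ⟨walkList_length, (admissibleCenter_succ_iff (by simp; omega)).mpr
      ⟨hw, by omega, by rw [walkList_length, h3]; omega⟩, h0, h1, h2, h3⟩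

end boundary

theorem card_admissible_tuples_boundary₂_general (n k : ℕ)
    (hk : 2 ≤ k) (hkn : k ≤ n - 1) :
    {s : List ℕ | s.length = n ∧ AdmissibleCenter k s ∧
      s.getD 0 0 = 1 ∧ s.getD 1 0 = 1 ∧
      s.getD (n - 2) 0 = 1 ∧ s.getD (n - 1) 0 = 0}.ncard
      = Nat.choose (n - 3) (k - 2) := by
  obtain ⟨c, rfl⟩ : ∃ c, k = c + 1 := ⟨k - 1, by omega⟩
  rw [admissible_boundary_eq_image_walkList (by omega) (by omega),
    (injOn_walkList (by omega)).ncard_image, Set.ncard_coe_finset, card_powersetCard,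
    Nat.card_Ico]
  exact Nat.choose_symm_of_eq_add (by omega)

/-- For `n ≥ 4` and `2 ≤ k ≤ n-1`, the number of admissible tuples
`(s 1, …, s n)` of length `n` with center `k` satisfying
`s 1 = 1`, `s 2 = 1`, `s (n-1) = 1`, `s n = 0` is `C(n-3, k-2)`. -/
theorem card_admissible_tuples_boundary₂ (n k : ℕ) (hn : 4 ≤ n)
    (hk : 2 ≤ k) (hkn : k ≤ n - 1) :
    {s : List ℕ | s.length = n ∧ AdmissibleCenter k s ∧
      s.getD 0 0 = 1 ∧ s.getD 1 0 = 1 ∧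
      s.getD (n - 2) 0 = 1 ∧ s.getD (n - 1) 0 = 0}.ncard
      = Nat.choose (n - 3) (k - 2) :=
  card_admissible_tuples_boundary₂_general n k hk hkn
end

section
/- Let c ∈ ℂ and let (y_1, y_2) ∈ (ℂ∖{0})². Then the pair of equations 1 − y_1^{−2}y_2^{−1} + y_2^{−1} = 0 and 1 − y_1^{−1}y_2^{−2} − c·y_2^{−2} − y_1·y_2^{−2} = 0 holds if and only if y_2^{−1}·(y_1^{−2} − 1) = 1 and y_1^{5} + (c − 1)·y_1^{4} + y_1^{3} + 2·y_1^{2} − 1 = 0. -/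
/-!
The first equation is the second one of the target system, rearranged; it says
`y₂ = y₁⁻² - 1`, and in particular forces `y₂ ≠ 0`. Multiplied by `y₂²`, the second
equation reads `y₂² = y₁⁻¹ + c + y₁`; substituting `y₂ = y₁⁻² - 1` and clearing the
denominator `y₁⁴` turns it into the quintic.
-/

lemma eq_of_inv_mul_eq_one₀ {G : Type*} [GroupWithZero G] {a b : G} (h : a⁻¹ * b = 1) :
    a = b := by
  have ha : a ≠ 0 := by
    rintro rfl
    simp at h
  exact (inv_mul_eq_one₀ ha).mp h

section Field

variable {K : Type*} [Field K]

lemma one_sub_mul_add_eq_zero_iff (a b : K) : 1 - a * b + b = 0 ↔ b * (a - 1) = 1 := by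
  constructor <;> intro h <;> linear_combination -h

lemma one_sub_mul_inv_sq_eq_zero_iff {x y c : K} (hy : y ≠ 0) :
    1 - x⁻¹ * (y ^ 2)⁻¹ - c * (y ^ 2)⁻¹ - x * (y ^ 2)⁻¹ = 0 ↔ y ^ 2 = x⁻¹ + c + x := by
  have hy2 : y ^ 2 ≠ 0 := pow_ne_zero 2 hy
  rw [show 1 - x⁻¹ * (y ^ 2)⁻¹ - c * (y ^ 2)⁻¹ - x * (y ^ 2)⁻¹ =
      1 - (x⁻¹ + c + x) * (y ^ 2)⁻¹ by ring,
    sub_eq_zero, eq_comm, mul_inv_eq_one₀ hy2, eq_comm]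

lemma inv_sq_sub_one_sq_eq_iff {x : K} (c : K) (hx : x ≠ 0) :
    ((x ^ 2)⁻¹ - 1) ^ 2 = x⁻¹ + c + x ↔
      x ^ 5 + (c - 1) * x ^ 4 + x ^ 3 + 2 * x ^ 2 - 1 = 0 := by
  have key : ((x ^ 2)⁻¹ - 1) ^ 2 - (x⁻¹ + c + x) =
      -(x ^ 5 + (c - 1) * x ^ 4 + x ^ 3 + 2 * x ^ 2 - 1) / x ^ 4 := by
    field_simp
    ring
  rw [← sub_eq_zero, key, div_eq_zero_iff, neg_eq_zero, or_iff_left (pow_ne_zero 4 hx)]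

end Field

theorem critical_point_equations_simplification_general
    (c y₁ y₂ : ℂ) (h₁ : y₁ ≠ 0) :
    (1 - (y₁ ^ 2)⁻¹ * y₂⁻¹ + y₂⁻¹ = 0 ∧
      1 - y₁⁻¹ * (y₂ ^ 2)⁻¹ - c * (y₂ ^ 2)⁻¹ - y₁ * (y₂ ^ 2)⁻¹ = 0) ↔
    (y₂⁻¹ * ((y₁ ^ 2)⁻¹ - 1) = 1 ∧
      y₁ ^ 5 + (c - 1) * y₁ ^ 4 + y₁ ^ 3 + 2 * y₁ ^ 2 - 1 = 0) := by
  rw [one_sub_mul_add_eq_zero_iff]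
  refine and_congr_right fun hfirst => ?_
  have hy₂ : y₂ = (y₁ ^ 2)⁻¹ - 1 := eq_of_inv_mul_eq_one₀ hfirst
  have hy₂_ne : y₂ ≠ 0 := by
    rintro rfl
    simp at hfirst
  rw [one_sub_mul_inv_sq_eq_zero_iff hy₂_ne, hy₂, inv_sq_sub_one_sq_eq_iff c h₁]

/-- The simplification of the critical point equations in Section 3.4: for
`c ∈ ℂ` and nonzero `y₁, y₂ ∈ ℂ`, the system
`1 - y₁⁻²y₂⁻¹ + y₂⁻¹ = 0` and `1 - y₁⁻¹y₂⁻² - c y₂⁻² - y₁ y₂⁻² = 0`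
holds iff `y₂⁻¹(y₁⁻² - 1) = 1` and
`y₁⁵ + (c-1)y₁⁴ + y₁³ + 2y₁² - 1 = 0`. -/
theorem critical_point_equations_simplification
    (c y₁ y₂ : ℂ) (h₁ : y₁ ≠ 0) (h₂ : y₂ ≠ 0) :
    (1 - (y₁ ^ 2)⁻¹ * y₂⁻¹ + y₂⁻¹ = 0 ∧
      1 - y₁⁻¹ * (y₂ ^ 2)⁻¹ - c * (y₂ ^ 2)⁻¹ - y₁ * (y₂ ^ 2)⁻¹ = 0) ↔
    (y₂⁻¹ * ((y₁ ^ 2)⁻¹ - 1) = 1 ∧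
      y₁ ^ 5 + (c - 1) * y₁ ^ 4 + y₁ ^ 3 + 2 * y₁ ^ 2 - 1 = 0) :=
  critical_point_equations_simplification_general c y₁ y₂ h₁
end

section
/- The complex polynomial p(y) = y^5 + 2y^4 + y^3 + 2y^2 − 1 has five distinct roots in ℂ, and no root of p equals 1 or −1. Consequently, the system of equations y_2^{−1}(y_1^{−2} − 1) = 1 and y_1^{5} + 2y_1^{4} + y_1^{3} + 2y_1^{2} − 1 = 0 has exactly five solutions (y_1, y_2) ∈ (ℂ∖{0})². -/
/-!
Over `ℂ` a polynomial has as many distinct roots as its degree as soon as it has no root in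
common with its derivative, and for the quintic `p = y⁵ + 2y⁴ + y³ + 2y² - 1` an explicit Bézout
identity `a p + b p' = const ≠ 0` rules out such a common root. For `y₁ ≠ 0` the first critical
point equation says exactly `y₂ = y₁⁻² - 1 ≠ 0`, i.e. `y₁² ≠ 1`, which holds at every root of `p`
since `p(±1) ≠ 0`. So the solutions form the graph of `y₁ ↦ y₁⁻² - 1` over the five roots.
-/

open Polynomial

lemma ne_zero_and_inv_mul_eq_one_iff {G₀ : Type*} [GroupWithZero G₀] {a b : G₀} :
    a ≠ 0 ∧ a⁻¹ * b = 1 ↔ b ≠ 0 ∧ a = b := by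
  constructor
  · rintro ⟨ha, hab⟩
    obtain rfl := (inv_mul_eq_one₀ ha).1 hab
    exact ⟨ha, rfl⟩
  · rintro ⟨hb, rfl⟩
    exact ⟨hb, inv_mul_cancel₀ hb⟩

namespace Polynomial

variable {K : Type*} [Field K] [IsAlgClosed K]

lemma separable_of_forall_isRoot_not_isRoot_derivative {p : K[X]}
    (h : ∀ a, p.IsRoot a → ¬ p.derivative.IsRoot a) : p.Separable := by
  rw [separable_def, isCoprime_iff_aeval_ne_zero_of_isAlgClosed (k := K) K]
  intro a
  simpa only [aeval_def, Algebra.algebraMap_self, RingHom.id_apply, eval₂_id, IsRoot,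
    or_iff_not_imp_left, not_not] using h a

lemma ncard_setOf_isRoot_of_separable {p : K[X]} (hp : p.Separable) :
    {a | p.IsRoot a}.ncard = p.natDegree := by
  classical
  have hroots : {a | p.IsRoot a} = p.rootSet K := by
    ext a
    simp [mem_rootSet, hp.ne_zero, IsRoot]
  rw [hroots, Set.ncard_eq_toFinset_card', Set.toFinset_card,
    card_rootSet_eq_natDegree hp (by simpa using IsAlgClosed.splits p)]

end Polynomial

noncomputable def quintic : ℂ[X] := X ^ 5 + 2 * X ^ 4 + X ^ 3 + 2 * X ^ 2 - 1

lemma isRoot_quintic_iff (y : ℂ) :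
    quintic.IsRoot y ↔ y ^ 5 + 2 * y ^ 4 + y ^ 3 + 2 * y ^ 2 - 1 = 0 := by
  simp [quintic, IsRoot]

lemma natDegree_quintic : quintic.natDegree = 5 := by
  unfold quintic
  compute_degree!

lemma isRoot_derivative_quintic_iff (y : ℂ) :
    quintic.derivative.IsRoot y ↔ 5 * y ^ 4 + 8 * y ^ 3 + 3 * y ^ 2 + 4 * y = 0 := by
  simp only [quintic, IsRoot, derivative_sub, derivative_add, derivative_mul, derivative_X_pow,
    derivative_ofNat, derivative_one, eval_sub, eval_add, eval_mul, eval_pow, eval_X, eval_C,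
    eval_ofNat, eval_zero]
  constructor <;> intro h <;> linear_combination h

lemma separable_quintic : quintic.Separable := by
  refine separable_of_forall_isRoot_not_isRoot_derivative fun y hp hp' => ?_
  rw [isRoot_quintic_iff] at hp
  rw [isRoot_derivative_quintic_iff] at hp'
  -- Bézout certificate for `p` and `p'`, found by the extended Euclidean algorithm.
  have : (475375 : ℂ) = 0 := by
    linear_combination (-(334750 * y ^ 3 + 334100 * y ^ 2 + 138200 * y + 475375)) * hp +
      (66950 * y ^ 4 + 93600 * y ^ 3 + 38300 * y ^ 2 + 180075 * y - 34550) * hp'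
  norm_num at this

lemma ncard_quintic_roots :
    {y : ℂ | y ^ 5 + 2 * y ^ 4 + y ^ 3 + 2 * y ^ 2 - 1 = 0}.ncard = 5 := by
  simpa only [isRoot_quintic_iff, natDegree_quintic]
    using ncard_setOf_isRoot_of_separable separable_quintic

lemma quintic_root_ne_one_and_ne_neg_one (y : ℂ)
    (h : y ^ 5 + 2 * y ^ 4 + y ^ 3 + 2 * y ^ 2 - 1 = 0) : y ≠ 1 ∧ y ≠ -1 := by
  constructor <;> rintro rfl <;> norm_num at h

lemma criticalPoints_eq_graphOn :
    {p : ℂ × ℂ | p.1 ≠ 0 ∧ p.2 ≠ 0 ∧ p.2⁻¹ * ((p.1 ^ 2)⁻¹ - 1) = 1 ∧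
        p.1 ^ 5 + 2 * p.1 ^ 4 + p.1 ^ 3 + 2 * p.1 ^ 2 - 1 = 0} =
      {y : ℂ | y ^ 5 + 2 * y ^ 4 + y ^ 3 + 2 * y ^ 2 - 1 = 0}.graphOn (fun y => (y ^ 2)⁻¹ - 1) := by
  ext ⟨u, v⟩
  simp only [Set.mem_ofPred_eq, Set.mem_graphOn, ← and_assoc (a := v ≠ 0),
    ne_zero_and_inv_mul_eq_one_iff, sub_ne_zero, ne_eq, inv_eq_one, sq_eq_one_iff, not_or]
  constructor
  · rintro ⟨-, ⟨-, rfl⟩, hu⟩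
    exact ⟨hu, rfl⟩
  · rintro ⟨hu, rfl⟩
    have hu0 : u ≠ 0 := by rintro rfl; norm_num at hu
    exact ⟨hu0, ⟨quintic_root_ne_one_and_ne_neg_one u hu, rfl⟩, hu⟩

/-- The polynomial `y⁵ + 2y⁴ + y³ + 2y² - 1` has five distinct complex roots,
none of which equals `1` or `-1`; consequently the system
`y₂⁻¹(y₁⁻² - 1) = 1`, `y₁⁵ + 2y₁⁴ + y₁³ + 2y₁² - 1 = 0` has exactly five
solutions `(y₁, y₂) ∈ (ℂ∖{0})²`. -/
theorem five_solutions_bulk_deformed :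
    {y : ℂ | y ^ 5 + 2 * y ^ 4 + y ^ 3 + 2 * y ^ 2 - 1 = 0}.ncard = 5 ∧
    (∀ y : ℂ, y ^ 5 + 2 * y ^ 4 + y ^ 3 + 2 * y ^ 2 - 1 = 0 → y ≠ 1 ∧ y ≠ -1) ∧
    {p : ℂ × ℂ | p.1 ≠ 0 ∧ p.2 ≠ 0 ∧
      p.2⁻¹ * ((p.1 ^ 2)⁻¹ - 1) = 1 ∧
      p.1 ^ 5 + 2 * p.1 ^ 4 + p.1 ^ 3 + 2 * p.1 ^ 2 - 1 = 0}.ncard = 5 := by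
  refine ⟨ncard_quintic_roots, quintic_root_ne_one_and_ne_neg_one, ?_⟩
  rw [criticalPoints_eq_graphOn, Set.ncard_graphOn, ncard_quintic_roots]
end
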